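/- Let J = {d₁ < d₂ < ⋯ < d_l} ∈ 𝓙_{r,m} with d₀ := 0. Then the number of elements J′ ∈ 𝓙_{r,m} with J′ ⪯ J equals L = 1 + Σ_{j=1}^{l−1} C(m, j) + Σ_{j=1}^{l} Σ_{k=d_{j−1}+1}^{d_j−1} C(m−k, l−j), where an inner sum with d_{j−1}+1 > d_j−1 is 0 and C denotes the binomial coefficient. -/

import Mathlib

-- split lemmas
lemma out_part (a m N : ℕ) (P : Finset ℕ → Prop) [DecidablePred P] :
    (((Finset.Icc (a+1) m).powersetCard N).filter (fun K => P K ∧ a+1 ∉ K))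
      = ((Finset.Icc (a+2) m).powersetCard N).filter P := by
  ext K
  simp only [Finset.mem_filter, Finset.mem_powersetCard]
  constructor
  · rintro ⟨⟨hsub, hcard⟩, hP, hnot⟩
    refine ⟨⟨fun x hx => ?_, hcard⟩, hP⟩
    have := hsub hx
    simp only [Finset.mem_Icc] at this ⊢
    have : x ≠ a + 1 := fun h => hnot (h ▸ hx)
    omega
  · rintro ⟨⟨hsub, hcard⟩, hP⟩
    have hnot : a + 1 ∉ K := fun h => by
      have := hsub h; simp only [Finset.mem_Icc] at this; omega
    refine ⟨⟨fun x hx => ?_, hcard⟩, hP, hnot⟩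
    have := hsub hx
    simp only [Finset.mem_Icc] at this ⊢
    omega

lemma in_part (a m N : ℕ) (hm : a + 1 ≤ m) (P : Finset ℕ → Prop) [DecidablePred P] :
    (((Finset.Icc (a+1) m).powersetCard (N+1)).filter (fun K => P K ∧ a+1 ∈ K)).card
      = (((Finset.Icc (a+2) m).powersetCard N).filter (fun T => P (insert (a+1) T))).card := by
  refine Finset.card_bij' (fun K _ => K.erase (a+1)) (fun T _ => insert (a+1) T) ?_ ?_ ?_ ?_
  · intro K hK
    simp only [Finset.mem_filter, Finset.mem_powersetCard] at hK ⊢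
    obtain ⟨⟨hsub, hcard⟩, hP, hmem⟩ := hK
    refine ⟨⟨fun x hx => ?_, ?_⟩, ?_⟩
    · rw [Finset.mem_erase] at hx
      have := hsub hx.2
      simp only [Finset.mem_Icc] at this ⊢
      have := hx.1
      omega
    · rw [Finset.card_erase_of_mem hmem, hcard]; omega
    · rw [Finset.insert_erase hmem]; exact hP
  · intro T hT
    simp only [Finset.mem_filter, Finset.mem_powersetCard] at hT ⊢
    obtain ⟨⟨hsub, hcard⟩, hP⟩ := hT
    have hnot : a + 1 ∉ T := fun h => by
      have := hsub h; simp only [Finset.mem_Icc] at this; omega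
    refine ⟨⟨fun x hx => ?_, ?_⟩, hP, Finset.mem_insert_self _ _⟩
    · rcases Finset.mem_insert.1 hx with h | h
      · simp [Finset.mem_Icc]; omega
      · have := hsub h; simp only [Finset.mem_Icc] at this ⊢; omega
    · rw [Finset.card_insert_of_notMem hnot, hcard]
  · intro K hK
    simp only [Finset.mem_filter] at hK
    exact Finset.insert_erase hK.2.2
  · intro T hT
    simp only [Finset.mem_filter, Finset.mem_powersetCard] at hT
    have hnot : a + 1 ∉ T := fun h => by
      have := hT.1.1 h; simp only [Finset.mem_Icc] at this; omega
    exact Finset.erase_insert hnot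

def fAux (m : ℕ) : ℕ → List ℕ → ℕ
  | _, [] => 0
  | a, b :: t => (∑ k ∈ Finset.Icc (a+1) (b-1), (m - k).choose t.length) + fAux m b t

lemma key_count (m : ℕ) : ∀ (L : List ℕ) (a : ℕ), List.Pairwise (· < ·) L →
    (∀ x ∈ L, a < x ∧ x ≤ m) →
    (((Finset.Icc (a+1) m).powersetCard L.length).filter
      (fun K => List.Lex (· < ·) (K.sort (· ≤ ·)) L)).card = fAux m a L := by
  intro L
  induction L with
  | nil =>
    intro a _ _
    rw [show fAux m a [] = 0 from rfl]
    simp only [List.length_nil, Finset.powersetCard_zero]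
    rw [Finset.card_eq_zero, Finset.filter_eq_empty_iff]
    intro K _
    exact fun h => (fun (l' : List ℕ) (h' : List.Lex (· < ·) l' []) => by cases h') _ h
  | cons b t IH =>
    intro a hsort hmem
    have htsort : List.Pairwise (· < ·) t := hsort.of_cons
    have hab : a < b := (hmem b List.mem_cons_self).1
    have hbm : b ≤ m := (hmem b List.mem_cons_self).2
    have htmem : ∀ x ∈ t, b < x ∧ x ≤ m := fun x hx =>
      ⟨List.rel_of_pairwise_cons hsort hx, (hmem x (List.mem_cons_of_mem _ hx)).2⟩
    obtain ⟨n, hn⟩ : ∃ n, b = a + 1 + n := ⟨b - a - 1, by omega⟩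
    clear hab hmem
    induction n generalizing a with
    | zero =>
      have hb : b = a + 1 := by omega
      subst hb
      -- split the count by membership of a+1
      set S := (Finset.Icc (a+1) m).powersetCard (((a+1) :: t).length) with hS
      set P : Finset ℕ → Prop := fun K => List.Lex (· < ·) (K.sort (· ≤ ·)) ((a+1) :: t) with hP
      have hsplit : (S.filter P).card
          = (S.filter (fun K => P K ∧ (a+1) ∈ K)).card
            + (S.filter (fun K => P K ∧ (a+1) ∉ K)).card := by
        rw [← Finset.card_filter_add_card_filter_not
          (s := S.filter P) (p := fun K => (a+1) ∈ K), Finset.filter_filter, Finset.filter_filter]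
      have hout : (S.filter (fun K => P K ∧ (a+1) ∉ K)).card = 0 := by
        rw [hS, show ((a+1) :: t).length = t.length + 1 from rfl, out_part a m (t.length+1) P]
        rw [Finset.card_eq_zero, Finset.filter_eq_empty_iff]
        intro K hK
        simp only [Finset.mem_powersetCard] at hK
        have hne : K.sort (· ≤ ·) ≠ [] := by
          intro h
          have := Finset.length_sort (α := ℕ) (· ≤ ·) (s := K)
          rw [h] at this
          simp at this
          omega
        obtain ⟨c, rest, hcr⟩ := List.exists_cons_of_ne_nil hne
        have hc : c ∈ K := by
          rw [← Finset.mem_sort (· ≤ ·), hcr]; exact List.mem_cons_self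
        have hc2 : a + 2 ≤ c := by
          have := hK.1 hc; simp only [Finset.mem_Icc] at this; omega
        intro hlex
        simp only [hP] at hlex
        rw [hcr] at hlex
        cases hlex with
        | cons h => omega
        | rel h => omega
      have hin : (S.filter (fun K => P K ∧ (a+1) ∈ K)).card = fAux m (a+1) t := by
        rw [hS, show ((a+1) :: t).length = t.length + 1 from rfl,
          in_part a m t.length hbm P]
        have hcong : ∀ T ∈ (Finset.Icc (a+2) m).powersetCard t.length,
            (P (insert (a+1) T) ↔ List.Lex (· < ·) (T.sort (· ≤ ·)) t) := by
          intro T hT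
          simp only [Finset.mem_powersetCard] at hT
          have h1 : ∀ x ∈ T, a + 1 ≤ x := fun x hx => by
            have := hT.1 hx; simp only [Finset.mem_Icc] at this; omega
          have h2 : a + 1 ∉ T := fun h => by
            have := hT.1 h; simp only [Finset.mem_Icc] at this; omega
          simp only [hP]
          rw [Finset.sort_insert _ h1 h2, List.lex_cons_iff]
        rw [Finset.filter_congr hcong]
        have := IH (a+1) htsort htmem
        convert this using 3
      rw [hsplit, hout, hin]
      rw [show fAux m a ((a+1) :: t)
        = (∑ k ∈ Finset.Icc (a+1) (a+1-1), (m - k).choose t.length) + fAux m (a+1) t from rfl]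
      rw [show Finset.Icc (a+1) (a+1-1) = ∅ from by simp, Finset.sum_empty]
      omega
    | succ n IHn =>
      have hb : b = a + 2 + n := by omega
      have ham : a + 1 ≤ m := by omega
      set S := (Finset.Icc (a+1) m).powersetCard (((b) :: t).length) with hS
      set P : Finset ℕ → Prop := fun K => List.Lex (· < ·) (K.sort (· ≤ ·)) (b :: t) with hP
      have hsplit : (S.filter P).card
          = (S.filter (fun K => P K ∧ (a+1) ∈ K)).card
            + (S.filter (fun K => P K ∧ (a+1) ∉ K)).card := by
        rw [← Finset.card_filter_add_card_filter_not
          (s := S.filter P) (p := fun K => (a+1) ∈ K), Finset.filter_filter, Finset.filter_filter]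
      have hout : (S.filter (fun K => P K ∧ (a+1) ∉ K)).card = fAux m (a+1) (b :: t) := by
        rw [hS, show ((b) :: t).length = t.length + 1 from rfl, out_part a m (t.length+1) P]
        have := IHn (a+1) (by omega)
        rw [← this]
        rfl
      have hin : (S.filter (fun K => P K ∧ (a+1) ∈ K)).card = (m - (a+1)).choose t.length := by
        rw [hS, show ((b) :: t).length = t.length + 1 from rfl,
          in_part a m t.length ham P]
        have hcong : ∀ T ∈ (Finset.Icc (a+2) m).powersetCard t.length, P (insert (a+1) T) := by
          intro T hT
          simp only [Finset.mem_powersetCard] at hT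
          have h1 : ∀ x ∈ T, a + 1 ≤ x := fun x hx => by
            have := hT.1 hx; simp only [Finset.mem_Icc] at this; omega
          have h2 : a + 1 ∉ T := fun h => by
            have := hT.1 h; simp only [Finset.mem_Icc] at this; omega
          simp only [hP]
          rw [Finset.sort_insert _ h1 h2]
          exact List.Lex.rel (by omega)
        rw [Finset.filter_true_of_mem hcong, Finset.card_powersetCard, Nat.card_Icc]
        congr 1
        omega
      rw [hsplit, hout, hin]
      rw [show fAux m a (b :: t)
        = (∑ k ∈ Finset.Icc (a+1) (b-1), (m - k).choose t.length) + fAux m b t from rfl]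
      rw [show fAux m (a+1) (b :: t)
        = (∑ k ∈ Finset.Icc (a+2) (b-1), (m - k).choose t.length) + fAux m b t from rfl]
      rw [show Finset.Icc (a+1) (b-1) = insert (a+1) (Finset.Icc (a+2) (b-1)) from by
        ext x; simp only [Finset.mem_Icc, Finset.mem_insert]; omega]
      rw [Finset.sum_insert (by simp only [Finset.mem_Icc]; omega)]
      ring
/-- Recursive form of the rank sum. -/
lemma fAux_bridge (m : ℕ) : ∀ (n : ℕ) (e : ℕ → ℕ),
    fAux m (e 0) ((List.range n).map (fun i => e (i+1)))
      = ∑ j ∈ Finset.Icc 1 n, ∑ k ∈ Finset.Icc (e (j-1) + 1) (e j - 1),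
          (m - k).choose (n - j) := by
  intro n
  induction n with
  | zero => intro e; simp [fAux]
  | succ n IH =>
    intro e
    rw [List.range_succ_eq_map]
    simp only [List.map_cons, List.map_map]
    have h1 : (List.range n).map ((fun i => e (i+1)) ∘ Nat.succ)
        = (List.range n).map (fun i => (fun i => e (i+1)) (i+1)) := by
      simp [Function.comp]
    rw [h1]
    show (∑ k ∈ Finset.Icc (e 0 + 1) (e 1 - 1), (m - k).choose _) + _ = _
    rw [IH (fun i => e (i+1))]
    have hlen : ((List.range n).map (fun i => e (i+1+1))).length = n := by simp
    rw [hlen]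
    -- RHS : split off j = 1
    have h2 : Finset.Icc 1 (n+1) = insert 1 (Finset.Icc 2 (n+1)) := by
      ext x; simp; omega
    rw [h2, Finset.sum_insert (by simp)]
    have h3 : Finset.Icc 2 (n+1) = Finset.map (addRightEmbedding 1) (Finset.Icc 1 n) := by
      rw [Finset.map_add_right_Icc]
    rw [h3, Finset.sum_map]
    simp only [addRightEmbedding_apply, Nat.add_sub_cancel, Nat.succ_sub_succ]
    have : ∀ j ∈ Finset.Icc 1 n,
        (∑ k ∈ Finset.Icc (e (j-1+1) + 1) (e (j+1) - 1), (m - k).choose (n - j))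
        = ∑ k ∈ Finset.Icc (e j + 1) (e (j+1) - 1), (m - k).choose (n - j) := by
      intro j hj
      simp only [Finset.mem_Icc] at hj
      have : j - 1 + 1 = j := by omega
      rw [this]
    rw [Finset.sum_congr rfl this]
    simp



/-- The candidate family 𝓙_{r,m} of nonempty subsets of {1,…,m} of cardinality at
most r. -/
def candidateFamily (r m : ℕ) : Set (Finset ℕ) :=
  {J | J ⊆ Finset.Icc 1 m ∧ 0 < J.card ∧ J.card ≤ r}

/-- The total order ⪯ on 𝓙_{r,m}: first by cardinality, then lexicographically on
the increasingly sorted lists of elements. -/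
def precOrder (J₁ J₂ : Finset ℕ) : Prop :=
  J₁.card < J₂.card ∨ (J₁.card = J₂.card ∧
    (J₁.sort (· ≤ ·) = J₂.sort (· ≤ ·) ∨
      List.Lex (· < ·) (J₁.sort (· ≤ ·)) (J₂.sort (· ≤ ·))))

/-- For J = {d₁ < ⋯ < d_l} ∈ 𝓙_{r,m} (with d₀ := 0), the number of J′ ∈ 𝓙_{r,m}
with J′ ⪯ J equals
L = 1 + Σ_{j=1}^{l−1} C(m,j) + Σ_{j=1}^{l} Σ_{k=d_{j−1}+1}^{d_j−1} C(m−k, l−j). -/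
theorem rank_formula_in_candidate_family
    (r m : ℕ) (hr : 1 ≤ r) (hrm : r ≤ m)
    (l : ℕ) (hl : 1 ≤ l) (hlr : l ≤ r)
    (d : ℕ → ℕ) (hd0 : d 0 = 0)
    (hmono : ∀ i j : ℕ, i < j → j ≤ l → d i < d j)
    (hdm : d l ≤ m)
    (J : Finset ℕ) (hJ : J = (Finset.Icc 1 l).image d) :
    {J' : Finset ℕ | J' ∈ candidateFamily r m ∧ precOrder J' J}.ncard
      = 1 + (∑ j ∈ Finset.Icc 1 (l - 1), Nat.choose m j)
          + ∑ j ∈ Finset.Icc 1 l,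
              ∑ k ∈ Finset.Icc (d (j - 1) + 1) (d j - 1),
                Nat.choose (m - k) (l - j) := by
  classical
  set L : List ℕ := (List.range l).map (fun i => d (i+1)) with hL
  have hLsorted_lt : L.Pairwise (· < ·) := by
    rw [hL, List.pairwise_map]
    refine (List.pairwise_lt_range (n := l)).imp_of_mem ?_
    intro a b ha hb hab
    exact hmono (a+1) (b+1) (by omega) (by rw [List.mem_range] at hb; omega)
  have hnodup : L.Nodup := hLsorted_lt.nodup
  have hLsorted_le : L.Pairwise (· ≤ ·) := hLsorted_lt.imp le_of_lt
  have hLlen : L.length = l := by simp [hL]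
  have htoF : L.toFinset = J := by
    rw [hJ]
    ext x
    simp only [hL, List.mem_toFinset, List.mem_map, List.mem_range, Finset.mem_image,
      Finset.mem_Icc]
    constructor
    · rintro ⟨i, hi, rfl⟩; exact ⟨i+1, by omega, rfl⟩
    · rintro ⟨j, hj, rfl⟩; exact ⟨j-1, by omega, by congr 1; omega⟩
  have hsortJ : J.sort (· ≤ ·) = L := by
    rw [← htoF]
    exact (List.toFinset_sort _ hnodup).mpr hLsorted_le
  have hJcard : J.card = l := by
    rw [← htoF, List.toFinset_card_of_nodup hnodup, hLlen]
  have hJsub : J ⊆ Finset.Icc 1 m := by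
    intro x hx
    rw [hJ] at hx
    simp only [Finset.mem_image, Finset.mem_Icc] at hx
    obtain ⟨j, hj, rfl⟩ := hx
    simp only [Finset.mem_Icc]
    constructor
    · have := hmono 0 j (by omega) (by omega); omega
    · rcases eq_or_lt_of_le hj.2 with h | h
      · rw [h]; exact hdm
      · have := hmono j l h le_rfl; omega
  set S : Finset (Finset ℕ) := (Finset.Icc 1 m).powerset.filter
    (fun K => (0 < K.card ∧ K.card ≤ r) ∧ precOrder K J) with hS
  have hset : {J' : Finset ℕ | J' ∈ candidateFamily r m ∧ precOrder J' J} = ↑S := by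
    ext K
    simp only [hS, Set.mem_setOf_eq, Finset.coe_filter, Finset.mem_powerset,
      candidateFamily, Set.mem_setOf_eq]
    tauto
  rw [hset, Set.ncard_coe_finset]
  rw [← Finset.card_filter_add_card_filter_not (s := S) (p := fun K => K.card < l)]
  have hsmall : S.filter (fun K => K.card < l)
      = (Finset.Icc 1 (l-1)).biUnion (fun j => (Finset.Icc 1 m).powersetCard j) := by
    ext K
    simp only [hS, Finset.mem_filter, Finset.mem_powerset, Finset.mem_biUnion,
      Finset.mem_powersetCard, Finset.mem_Icc]
    constructor
    · rintro ⟨⟨hsub, ⟨hpos, _⟩, _⟩, hlt⟩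
      exact ⟨K.card, ⟨by omega, by omega⟩, hsub, rfl⟩
    · rintro ⟨j, hj, hsub, hcard⟩
      refine ⟨⟨hsub, ⟨by omega, by omega⟩, Or.inl ?_⟩, by omega⟩
      rw [hJcard]; omega
  have hbig : S.filter (fun K => ¬ K.card < l)
      = insert J (((Finset.Icc 1 m).powersetCard l).filter
          (fun K => List.Lex (· < ·) (K.sort (· ≤ ·)) L)) := by
    ext K
    simp only [hS, Finset.mem_filter, Finset.mem_powerset, Finset.mem_insert,
      Finset.mem_powersetCard]
    constructor
    · rintro ⟨⟨hsub, ⟨hpos, hKr⟩, hprec⟩, hge⟩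
      rcases hprec with h | ⟨hcardeq, heq | hlex⟩
      · rw [hJcard] at h; omega
      · left
        have : (K.sort (· ≤ ·)).toFinset = (J.sort (· ≤ ·)).toFinset := by rw [heq]
        rwa [Finset.sort_toFinset, Finset.sort_toFinset] at this
      · right
        exact ⟨⟨hsub, by rw [hcardeq, hJcard]⟩, by rwa [hsortJ] at hlex⟩
    · rintro (rfl | ⟨⟨hsub, hcard⟩, hlex⟩)
      · exact ⟨⟨hJsub, ⟨by omega, by omega⟩, Or.inr ⟨rfl, Or.inl rfl⟩⟩, by omega⟩
      · refine ⟨⟨hsub, ⟨by omega, by omega⟩, Or.inr ⟨by rw [hcard, hJcard], Or.inr ?_⟩⟩, by omega⟩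
        rwa [hsortJ]
  rw [hsmall, hbig]
  rw [Finset.card_biUnion (fun i _ j _ hij => Finset.pairwise_disjoint_powersetCard _ hij)]
  have hJnot : J ∉ ((Finset.Icc 1 m).powersetCard l).filter
      (fun K => List.Lex (· < ·) (K.sort (· ≤ ·)) L) := by
    simp only [Finset.mem_filter, hsortJ, not_and]
    intro _
    exact irrefl_of (List.Lex (· < ·)) L
  rw [Finset.card_insert_of_notMem hJnot]
  have hkey : (((Finset.Icc 1 m).powersetCard l).filter
      (fun K => List.Lex (· < ·) (K.sort (· ≤ ·)) L)).card
      = ∑ j ∈ Finset.Icc 1 l, ∑ k ∈ Finset.Icc (d (j - 1) + 1) (d j - 1),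
          Nat.choose (m - k) (l - j) := by
    have h1 := key_count m L 0 hLsorted_lt (by
      intro x hx
      rw [hL, List.mem_map] at hx
      obtain ⟨i, hi, rfl⟩ := hx
      rw [List.mem_range] at hi
      constructor
      · have := hmono 0 (i+1) (by omega) (by omega); omega
      · rcases eq_or_lt_of_le (show i + 1 ≤ l by omega) with h | h
        · rw [h]; exact hdm
        · have := hmono (i+1) l h le_rfl; omega)
    rw [hLlen] at h1
    have h2 := fAux_bridge m l d
    rw [hd0] at h2
    rw [← hL] at h2
    rw [show Finset.Icc 1 m = Finset.Icc (0+1) m from rfl, h1, h2]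
  rw [hkey]
  have hsum : ∀ j ∈ Finset.Icc 1 (l-1), ((Finset.Icc 1 m).powersetCard j).card = m.choose j := by
    intro j _
    rw [Finset.card_powersetCard, Nat.card_Icc, Nat.add_sub_cancel]
  rw [Finset.sum_congr rfl hsum]
  ring
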